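/- arXiv:2605.18961 — 3 statements merged into one kernel-verified Lean document; each statement's English description precedes it below -/
import Mathlib

section
/- Let L ≥ 1 and ρ ≥ 1 be natural numbers, P a finite type, and γ₀, γ∞ : P → (Fin 3 → Fin L) maps each of whose fibers has at most ρ elements. Then there exist maps γ₁₀, γ₀₁ : P → (Fin 3 → Fin L) such that: (a) for every p, γ₁₀(p) agrees with γ₀(p) in the first two coordinates; (b) for every p, γ₀₁(p) agrees with γ∞(p) in the first two coordinates; (c) for every p, γ₁₀(p) and γ₀₁(p) agree in the third coordinate; and (d) every fiber of γ₁₀ and every fiber of γ₀₁ has at most ρ elements. -/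
/-!
Forget the coordinate `i₀` (here the third one): each packet becomes an edge from the column of
its source to the column of its destination, in a bipartite multigraph whose vertices have degree
at most `ρ * L`, since a column holds `L` points with at most `ρ` packets each. By König's
edge-colouring theorem the edges can be coloured by `Fin ρ × Fin L` so that edges sharing a
vertex get distinct colours. The `Fin L` part of the colour is the common new coordinate; the
`Fin ρ` part tells apart the packets that then meet at one grid point, so at most `ρ` do.

König's theorem follows by padding the multigraph to a regular one and peeling off perfect
matchings, which exist by Hall's theorem.
-/

open Finset Function

universe u v

section EdgeColoring

variable {P : Type u} {α : Type v} {κ : Type*}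

/-- `c` is a proper edge colouring of the bipartite multigraph on two copies of `α` in which
each `p : P` is an edge from `f p` to `g p`. -/
def IsProperEdgeColoring (f g : P → α) (c : P → κ) : Prop :=
  Injective (fun p => (f p, c p)) ∧ Injective (fun p => (g p, c p))

lemma IsProperEdgeColoring.comp_injective {P' : Type*} {f g : P → α} {c : P → κ}
    (hc : IsProperEdgeColoring f g c) {i : P' → P} (hi : Injective i) :
    IsProperEdgeColoring (f ∘ i) (g ∘ i) (c ∘ i) :=
  ⟨hc.1.comp hi, hc.2.comp hi⟩

lemma IsProperEdgeColoring.injective_comp {κ' : Type*} {f g : P → α} {c : P → κ}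
    (hc : IsProperEdgeColoring f g c) {e : κ → κ'} (he : Injective e) :
    IsProperEdgeColoring f g (e ∘ c) :=
  ⟨(injective_id.prodMap he).comp hc.1, (injective_id.prodMap he).comp hc.2⟩

open Classical in
noncomputable def extendColoringOnRange {α' : Type*} {n : ℕ} (m : α' → P)
    (c : {p // p ∉ Set.range m} → Fin n) (p : P) : Fin (n + 1) :=
  if hp : p ∈ Set.range m then Fin.last n else (c ⟨p, hp⟩).castSucc

lemma injective_extendColoringOnRange {α' : Type*} {n : ℕ} {m : α' → P} {h : P → α}
    (hm : Injective (h ∘ m)) {c : {p // p ∉ Set.range m} → Fin n}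
    (hc : Injective fun q : {p // p ∉ Set.range m} => (h q, c q)) :
    Injective fun p => (h p, extendColoringOnRange m c p) := by
  intro p q hpq
  simp only [Prod.mk.injEq, extendColoringOnRange] at hpq
  obtain ⟨hh, hcol⟩ := hpq
  by_cases hp : p ∈ Set.range m <;> by_cases hq : q ∈ Set.range m <;>
    simp only [hp, hq, dite_true, dite_false] at hcol
  · obtain ⟨a, rfl⟩ := hp
    obtain ⟨b, rfl⟩ := hq
    rw [hm hh]
  · exact absurd hcol.symm (Fin.castSucc_ne_last _)
  · exact absurd hcol (Fin.castSucc_ne_last _)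
  · exact congrArg Subtype.val (hc (Prod.ext hh (Fin.castSucc_injective _ hcol)))

variable [Fintype P] [DecidableEq α]

lemma card_filter_mem_eq_mul {f : P → α} {k : ℕ} (hf : ∀ v, #{p | f p = v} = k)
    (s : Finset α) : #{p | f p ∈ s} = #s * k := by
  rw [← sum_card_fiberwise_eq_card_filter, sum_const_nat fun v _ => hf v]

theorem exists_perfectMatching_of_regular [Fintype α] {f g : P → α} {n : ℕ}
    (hf : ∀ v, #{p | f p = v} = n + 1) (hg : ∀ v, #{p | g p = v} = n + 1) :
    ∃ m : α → P, Bijective (f ∘ m) ∧ Bijective (g ∘ m) := by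
  let t : α → Finset α := fun v => image g {p | f p = v}
  have hall : ∀ s, #s ≤ #(s.biUnion t) := by
    intro s
    have hsub : ({p | f p ∈ s} : Finset P) ⊆ ({p | g p ∈ s.biUnion t} : Finset P) := by
      intro p hp
      simp only [mem_filter, mem_univ, true_and, mem_biUnion, t, mem_image] at hp ⊢
      exact ⟨f p, hp, p, rfl, rfl⟩
    have hcard := card_le_card hsub
    rw [card_filter_mem_eq_mul hf, card_filter_mem_eq_mul hg] at hcard
    exact Nat.le_of_mul_le_mul_right hcard n.succ_pos
  obtain ⟨M, hM, hMt⟩ := (all_card_le_biUnion_card_iff_exists_injective t).mp hall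
  have hedge : ∀ v, ∃ p, f p = v ∧ g p = M v := fun v => by
    obtain ⟨p, hp, hgp⟩ := mem_image.mp (hMt v)
    exact ⟨p, (mem_filter.mp hp).2, hgp⟩
  choose m hfm hgm using hedge
  refine ⟨m, ?_, ?_⟩
  · rw [show f ∘ m = id from funext hfm]
    exact bijective_id
  · rw [show g ∘ m = M from funext hgm]
    exact Finite.injective_iff_bijective.mp hM

lemma card_filter_compl_range {α' : Type*} {m : α' → P} {h : P → α} (hm : Bijective (h ∘ m))
    [Fintype {p // p ∉ Set.range m}] {v : α} {n : ℕ} (hv : #{p | h p = v} = n + 1) :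
    #{q : {p // p ∉ Set.range m} | h q = v} = n := by
  classical
  obtain ⟨a, ha, hunique⟩ := hm.existsUnique v
  have hmatched : ({p | h p = v ∧ p ∈ Set.range m} : Finset P) = {m a} := by
    ext p
    simp only [mem_filter, mem_univ, true_and, mem_singleton]
    constructor
    · rintro ⟨hp, b, rfl⟩
      rw [hunique b hp]
    · rintro rfl
      exact ⟨ha, a, rfl⟩
  have hrest : #{q : {p // p ∉ Set.range m} | h q = v} = #{p | h p = v ∧ p ∉ Set.range m} := by
    rw [← Fintype.card_subtype, ← Fintype.card_subtype]
    exact Fintype.card_congr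
      ((Equiv.subtypeSubtypeEquivSubtypeInter (· ∉ Set.range m) (h · = v)).trans
      (Equiv.subtypeEquivRight fun p => and_comm))
  have hsplit := card_filter_add_card_filter_not (s := ({p | h p = v} : Finset P))
    (· ∈ Set.range m)
  simp only [filter_filter, hmatched, card_singleton, hv] at hsplit
  omega

theorem exists_isProperEdgeColoring_of_regular [Fintype α] (n : ℕ) :
    ∀ {P : Type u} [Fintype P] (f g : P → α), (∀ v, #{p | f p = v} = n) →
      (∀ v, #{p | g p = v} = n) → ∃ c : P → Fin n, IsProperEdgeColoring f g c := by
  induction n with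
  | zero =>
    intro P _ f g hf _
    have : IsEmpty P := ⟨fun p => (card_pos.mpr ⟨p, by simp⟩).ne' (hf (f p))⟩
    exact ⟨isEmptyElim, injective_of_subsingleton _, injective_of_subsingleton _⟩
  | succ n ih =>
    intro P _ f g hf hg
    classical
    obtain ⟨m, hfm, hgm⟩ := exists_perfectMatching_of_regular hf hg
    obtain ⟨c, hcf, hcg⟩ := ih (fun q : {p // p ∉ Set.range m} => f q) (fun q => g q)
      (fun v => card_filter_compl_range hfm (hf v)) (fun v => card_filter_compl_range hgm (hg v))
    exact ⟨extendColoringOnRange m c, injective_extendColoringOnRange hfm.1 hcf,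
      injective_extendColoringOnRange hgm.1 hcg⟩

lemma card_filter_sumElim {D : Type*} [Fintype D] (f : P → α) (f' : D → α) (v : α) :
    #{x | Sum.elim f f' x = v} = #{p | f p = v} + #{x | f' x = v} := by
  rw [← card_disjSum]
  congr 1
  ext x
  cases x <;> simp

lemma card_filter_sigma_fst [Fintype α] (d : α → ℕ) (v : α) :
    #{x : Σ u, Fin (d u) | x.1 = v} = d v := by
  rw [← Fintype.card_subtype, Fintype.card_congr (Equiv.sigmaSubtype v), Fintype.card_fin]

lemma exists_fintype_card_fibers [Fintype α] {d₁ d₂ : α → ℕ} (h : ∑ v, d₁ v = ∑ v, d₂ v) :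
    ∃ (D : Type v) (_ : Fintype D) (f g : D → α),
      (∀ v, #{x | f x = v} = d₁ v) ∧ ∀ v, #{x | g x = v} = d₂ v := by
  have e : (Σ v, Fin (d₁ v)) ≃ Σ v, Fin (d₂ v) :=
    Fintype.equivOfCardEq (by simp only [Fintype.card_sigma, Fintype.card_fin, h])
  refine ⟨Σ v, Fin (d₁ v), inferInstance, Sigma.fst, fun x => (e x).1,
    card_filter_sigma_fst d₁, fun v => ?_⟩
  rw [← card_filter_sigma_fst d₂ v, ← Fintype.card_subtype, ← Fintype.card_subtype]
  exact Fintype.card_congr (e.subtypeEquiv fun _ => Iff.rfl)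

lemma sum_tsub_card_fiber [Fintype α] {f : P → α} {n : ℕ} (hf : ∀ v, #{p | f p = v} ≤ n) :
    ∑ v, (n - #{p | f p = v}) = Fintype.card α * n - Fintype.card P := by
  rw [sum_tsub_distrib _ fun v _ => hf v, sum_card_fiberwise_eq_card_filter, sum_const,
    smul_eq_mul, card_univ]
  simp

theorem exists_regular_extension [Fintype α] {f g : P → α} {n : ℕ}
    (hf : ∀ v, #{p | f p = v} ≤ n) (hg : ∀ v, #{p | g p = v} ≤ n) :
    ∃ (D : Type v) (_ : Fintype D) (f' g' : D → α),
      (∀ v, #{x | Sum.elim f f' x = v} = n) ∧ ∀ v, #{x | Sum.elim g g' x = v} = n := by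
  obtain ⟨D, _, f', g', hf', hg'⟩ := exists_fintype_card_fibers
    ((sum_tsub_card_fiber hf).trans (sum_tsub_card_fiber hg).symm)
  refine ⟨D, inferInstance, f', g', fun v => ?_, fun v => ?_⟩
  · rw [card_filter_sumElim, hf', Nat.add_sub_cancel' (hf v)]
  · rw [card_filter_sumElim, hg', Nat.add_sub_cancel' (hg v)]

theorem exists_isProperEdgeColoring [Fintype α] [Fintype κ] {f g : P → α}
    (hf : ∀ v, #{p | f p = v} ≤ Fintype.card κ) (hg : ∀ v, #{p | g p = v} ≤ Fintype.card κ) :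
    ∃ c : P → κ, IsProperEdgeColoring f g c := by
  obtain ⟨D, _, f', g', hf', hg'⟩ := exists_regular_extension hf hg
  obtain ⟨c, hc⟩ := exists_isProperEdgeColoring_of_regular _ _ _ hf' hg'
  exact ⟨(Fintype.equivFin κ).symm ∘ c ∘ Sum.inl,
    (hc.comp_injective Sum.inl_injective).injective_comp (Equiv.injective _)⟩

end EdgeColoring

section Routing

variable {ι β P : Type*} [Fintype ι] [DecidableEq ι] [DecidableEq β] [Fintype P] (i₀ : ι)

lemma card_fiber_restrict_le [Fintype β] {γ : P → ι → β} {ρ : ℕ} (hγ : ∀ v, #{p | γ p = v} ≤ ρ)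
    (u : {j // j ≠ i₀} → β) :
    #{p | (fun j : {j // j ≠ i₀} => γ p j) = u} ≤ ρ * Fintype.card β := by
  rw [← card_univ (α := β)]
  refine card_le_mul_card_image_of_maps_to (f := fun p => γ p i₀) (fun _ _ => mem_univ _) ρ
    fun b _ => le_trans (card_le_card ?_) (hγ ((Equiv.piSplitAt i₀ _).symm (b, u)))
  intro p hp
  simp only [mem_filter, mem_univ, true_and] at hp ⊢
  rw [Equiv.eq_symm_apply, ← hp.1, ← hp.2]
  rfl

lemma card_fiber_update_le {γ : P → ι → β} {ρ : ℕ} {c : P → Fin ρ × β}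
    (hc : Injective fun p => ((fun j : {j // j ≠ i₀} => γ p j), c p)) (v : ι → β) :
    #{p | update (γ p) i₀ (c p).2 = v} ≤ ρ := by
  refine le_trans (card_le_card_of_injOn (fun p => (c p).1) (t := univ)
    (fun _ _ => mem_univ _) ?_) (by simp)
  intro p hp q hq hpq
  simp only [coe_filter, mem_univ, true_and, Set.mem_ofPred_eq] at hp hq
  rw [← hq] at hp
  refine hc (Prod.ext (funext fun j => ?_) (Prod.ext hpq ?_))
  · simpa [update_of_ne j.2] using congrFun hp j
  · simpa using congrFun hp i₀

theorem exists_route_through_coord [Fintype β] (ρ : ℕ) {γ₀ γ₁ : P → ι → β}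
    (h₀ : ∀ v, #{p | γ₀ p = v} ≤ ρ) (h₁ : ∀ v, #{p | γ₁ p = v} ≤ ρ) :
    ∃ z : P → β, (∀ v, #{p | update (γ₀ p) i₀ (z p) = v} ≤ ρ) ∧
      ∀ v, #{p | update (γ₁ p) i₀ (z p) = v} ≤ ρ := by
  obtain ⟨c, hc₀, hc₁⟩ := exists_isProperEdgeColoring (κ := Fin ρ × β)
    (f := fun p (j : {j // j ≠ i₀}) => γ₀ p j) (g := fun p j => γ₁ p j)
    (by simpa using card_fiber_restrict_le i₀ h₀) (by simpa using card_fiber_restrict_le i₀ h₁)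
  exact ⟨fun p => (c p).2, card_fiber_update_le i₀ hc₀, card_fiber_update_le i₀ hc₁⟩

end Routing

theorem stmt8_general (L ρ : ℕ)
    (P : Type) [Fintype P] (γ₀ γinf : P → (Fin 3 → Fin L))
    (h₀ : ∀ v : Fin 3 → Fin L, (Finset.univ.filter fun p : P => γ₀ p = v).card ≤ ρ)
    (hinf : ∀ v : Fin 3 → Fin L, (Finset.univ.filter fun p : P => γinf p = v).card ≤ ρ) :
    ∃ γ₁₀ γ₀₁ : P → (Fin 3 → Fin L),
      (∀ p : P, ∀ i : Fin 3, i ≠ 2 → γ₁₀ p i = γ₀ p i) ∧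
      (∀ p : P, ∀ i : Fin 3, i ≠ 2 → γ₀₁ p i = γinf p i) ∧
      (∀ p : P, γ₁₀ p 2 = γ₀₁ p 2) ∧
      (∀ v : Fin 3 → Fin L, (Finset.univ.filter fun p : P => γ₁₀ p = v).card ≤ ρ) ∧
      (∀ v : Fin 3 → Fin L, (Finset.univ.filter fun p : P => γ₀₁ p = v).card ≤ ρ) := by
  obtain ⟨z, hz₀, hzinf⟩ := exists_route_through_coord 2 ρ h₀ hinf
  exact ⟨fun p => update (γ₀ p) 2 (z p), fun p => update (γinf p) 2 (z p),
    fun p i hi => update_of_ne hi _ _, fun p i hi => update_of_ne hi _ _,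
    fun p => by simp only [update_self], hz₀, hzinf⟩

/-- **Color route theorem in three dimensions.**
Packets `P` have sources `γ₀ p` and destinations `γ∞ p` in the grid `[L]³`
(`Fin 3 → Fin L`), with at most `ρ` packets at any source or destination point.
Then there are intermediate points `γ₁₀ p` (agreeing with the source in the first
two coordinates) and `γ₀₁ p` (agreeing with the destination in the first two
coordinates), agreeing with each other in the third coordinate, such that at most
`ρ` packets occupy any intermediate point. -/
theorem stmt8 (L ρ : ℕ) (hL : 1 ≤ L) (hρ : 1 ≤ ρ)
    (P : Type) [Fintype P] (γ₀ γinf : P → (Fin 3 → Fin L))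
    (h₀ : ∀ v : Fin 3 → Fin L, (Finset.univ.filter fun p : P => γ₀ p = v).card ≤ ρ)
    (hinf : ∀ v : Fin 3 → Fin L, (Finset.univ.filter fun p : P => γinf p = v).card ≤ ρ) :
    ∃ γ₁₀ γ₀₁ : P → (Fin 3 → Fin L),
      (∀ p : P, ∀ i : Fin 3, i ≠ 2 → γ₁₀ p i = γ₀ p i) ∧
      (∀ p : P, ∀ i : Fin 3, i ≠ 2 → γ₀₁ p i = γinf p i) ∧
      (∀ p : P, γ₁₀ p 2 = γ₀₁ p 2) ∧
      (∀ v : Fin 3 → Fin L, (Finset.univ.filter fun p : P => γ₁₀ p = v).card ≤ ρ) ∧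
      (∀ v : Fin 3 → Fin L, (Finset.univ.filter fun p : P => γ₀₁ p = v).card ≤ ρ) :=
  stmt8_general L ρ P γ₀ γinf h₀ hinf
end

section
/- Let L be a natural number, m ≥ 1, and q₁, …, q_m ∈ [L]³. Let C₂, C₁, C₀ be the 𝔽₂-vector spaces freely spanned by the squares, the edges, and the points of the grid [L]³, with boundary maps ∂₂ : C₂ → C₁ sending each square to the sum of its four boundary edges, and ∂₁ : C₁ → C₀ sending each edge to the sum of its two endpoints. If x ∈ C₁ is supported on the union over i = 1, …, m of the edges of Λ(q_i), and ∂₁ x = 0, then there exists y ∈ C₂ supported on the union over i = 1, …, m of the squares of Λ(q_i) such that ∂₂ y = x. -/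
open scoped Classical

/-- `stepAt i u v` means `v = u + e_i`: the points `u` and `v` agree at every
coordinate other than `i`, and the `i`-th coordinate of `v` is that of `u` plus 1. -/
def stepAt {L D : ℕ} (i : Fin D) (u v : Fin D → Fin L) : Prop :=
  (∀ j : Fin D, j ≠ i → v j = u j) ∧ (v i : ℕ) = (u i : ℕ) + 1

/-- The star plane `Λ(q)`: points of the grid agreeing with `q` in all but at
most two coordinates. -/
def starPlane {L D : ℕ} (q : Fin D → Fin L) : Set (Fin D → Fin L) :=
  { p | Set.ncard { k : Fin D | p k ≠ q k } ≤ 2 }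

/-- An edge of the grid `[L]³`, encoded by its lower endpoint and its direction
(the upper endpoint `pt + e_dir` must still lie in the grid). -/
abbrev GridEdge (L : ℕ) :=
  { e : (Fin 3 → Fin L) × Fin 3 // (e.1 e.2 : ℕ) + 1 < L }

/-- A square of the grid `[L]³`, encoded by its lower corner and the two
directions `i < j` (the corners `pt + e_i`, `pt + e_j`, `pt + e_i + e_j` must
still lie in the grid). -/
abbrev GridSquare (L : ℕ) :=
  { s : (Fin 3 → Fin L) × Fin 3 × Fin 3 //
      s.2.1 < s.2.2 ∧ (s.1 s.2.1 : ℕ) + 1 < L ∧ (s.1 s.2.2 : ℕ) + 1 < L }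

/-- The upper endpoint of a grid edge: `pt + e_dir`. -/
def GridEdge.upper {L : ℕ} (e : GridEdge L) : Fin 3 → Fin L :=
  Function.update e.1.1 e.1.2 ⟨(e.1.1 e.1.2 : ℕ) + 1, e.2⟩

/-- `v` is an endpoint of the grid edge `e`. -/
def GridEdge.endpoint {L : ℕ} (e : GridEdge L) (v : Fin 3 → Fin L) : Prop :=
  v = e.1.1 ∨ v = e.upper

/-- The grid edge `e` is one of the four boundary edges of the grid square `s`. -/
def GridSquare.bdryEdge {L : ℕ} (s : GridSquare L) (e : GridEdge L) : Prop :=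
  (e.1.1 = s.1.1 ∧ (e.1.2 = s.1.2.1 ∨ e.1.2 = s.1.2.2)) ∨
  (e.1.2 = s.1.2.1 ∧ stepAt s.1.2.2 s.1.1 e.1.1) ∨
  (e.1.2 = s.1.2.2 ∧ stepAt s.1.2.1 s.1.1 e.1.1)

/-- `v` is one of the four corners of the grid square `s`. -/
def GridSquare.corner {L : ℕ} (s : GridSquare L) (v : Fin 3 → Fin L) : Prop :=
  v = s.1.1 ∨ stepAt s.1.2.1 s.1.1 v ∨ stepAt s.1.2.2 s.1.1 v ∨
    ∃ w : Fin 3 → Fin L, stepAt s.1.2.1 s.1.1 w ∧ stepAt s.1.2.2 w v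

/-- The boundary map `∂₁ : C₁ → C₀` of the cubical chain complex of the grid
`[L]³` over `𝔽₂`, sending each edge to the sum of its two endpoints. -/
noncomputable def d1 (L : ℕ) (x : GridEdge L → ZMod 2) :
    (Fin 3 → Fin L) → ZMod 2 :=
  fun v => ∑ e : GridEdge L, if e.endpoint v then x e else 0

/-- The boundary map `∂₂ : C₂ → C₁` of the cubical chain complex of the grid
`[L]³` over `𝔽₂`, sending each square to the sum of its four boundary edges. -/
noncomputable def d2 (L : ℕ) (y : GridSquare L → ZMod 2) :
    GridEdge L → ZMod 2 :=
  fun e => ∑ s : GridSquare L, if s.bdryEdge e then y s else 0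

/-!
A union of star planes is a union of axis-parallel planes `{v | v k = c}` containing the three
planes through `q₁`. A single plane has no first homology: a planar cycle bounds the 2-chain that
gives each square the flux of the cycle through the segment of the grid below that square.
Gluing the planes one at a time, Mayer–Vietoris shows that no homology is created as long as the
new plane meets the union of the previous ones in a connected set. Once the three planes through
`q₁` are present this is automatic: a common point lies on an old plane, and two segments, the
first inside that plane and the second inside a plane through `q₁`, lead to `update q₁ k c`.
-/

section

open Function

variable {L : ℕ}

namespace GridEdge

lemma upper_apply_self (e : GridEdge L) : (e.upper e.1.2 : ℕ) = e.1.1 e.1.2 + 1 := by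
  simp [upper]

lemma upper_apply_of_ne (e : GridEdge L) {j : Fin 3} (h : j ≠ e.1.2) : e.upper j = e.1.1 j := by
  simp [upper, update_of_ne h]

lemma lower_ne_upper (e : GridEdge L) : e.1.1 ≠ e.upper := fun h => by
  have := congrArg (fun v => (v e.1.2 : ℕ)) h
  simp only [upper_apply_self] at this
  omega

end GridEdge

lemma d1_apply_eq_sum (x : GridEdge L → ZMod 2) (v : Fin 3 → Fin L) :
    d1 L x v = ∑ e, x e * (Pi.single e.1.1 1 + Pi.single e.upper 1 : _ → ZMod 2) v := by
  refine Finset.sum_congr rfl fun e _ => ?_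
  by_cases h₁ : v = e.1.1
  · subst h₁
    simp [GridEdge.endpoint, Ne.symm e.lower_ne_upper]
  · by_cases h₂ : v = e.upper
    · subst h₂
      simp [GridEdge.endpoint, h₁]
    · simp [GridEdge.endpoint, h₁, h₂]

noncomputable def d1ₗ (L : ℕ) :
    (GridEdge L → ZMod 2) →ₗ[ZMod 2] ((Fin 3 → Fin L) → ZMod 2) where
  toFun := d1 L
  map_add' x x' := by
    ext v; simp only [d1_apply_eq_sum, Pi.add_apply, add_mul, Finset.sum_add_distrib]
  map_smul' r x := by
    ext v; simp only [d1_apply_eq_sum, Pi.smul_apply, smul_eq_mul, mul_assoc, Finset.mul_sum,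
      RingHom.id_apply]

lemma d1_zero : d1 L 0 = 0 :=
  (d1ₗ L).map_zero

lemma d1_add (x x' : GridEdge L → ZMod 2) : d1 L (x + x') = d1 L x + d1 L x' :=
  (d1ₗ L).map_add x x'

lemma d2_add (y y' : GridSquare L → ZMod 2) : d2 L (y + y') = d2 L y + d2 L y' := by
  ext e
  simp only [d2, Pi.add_apply, ← Finset.sum_add_distrib]
  refine Finset.sum_congr rfl fun s _ => ?_
  split_ifs <;> simp

lemma d1_single (e : GridEdge L) :
    d1 L (Pi.single e 1) = Pi.single e.1.1 1 + Pi.single e.upper 1 := by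
  ext v
  simp [d1_apply_eq_sum, Pi.single_apply]

lemma sum_d1_apply_mem (S : Finset (Fin 3 → Fin L)) (x : GridEdge L → ZMod 2) :
    ∑ v ∈ S, d1 L x v =
      ∑ e, ((if e.1.1 ∈ S then x e else 0) + (if e.upper ∈ S then x e else 0)) := by
  simp only [d1_apply_eq_sum]
  rw [Finset.sum_comm]
  refine Finset.sum_congr rfl fun e _ => ?_
  simp [mul_add, Finset.sum_add_distrib, Pi.single_apply]

lemma sum_d1_apply_eq_zero (x : GridEdge L → ZMod 2) : ∑ v, d1 L x v = 0 := by
  rw [sum_d1_apply_mem]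
  simp [CharTwo.add_self_eq_zero]

def vertices (E : Set (GridEdge L)) : Set (Fin 3 → Fin L) := {v | ∃ e ∈ E, e.endpoint v}

lemma vertices_mono {E F : Set (GridEdge L)} (h : E ⊆ F) : vertices E ⊆ vertices F :=
  fun _ ⟨e, he, hv⟩ => ⟨e, h he, hv⟩

lemma support_d1_subset (x : GridEdge L → ZMod 2) :
    support (d1 L x) ⊆ vertices (support x) := by
  intro v hv
  by_contra h
  refine hv (Finset.sum_eq_zero fun e _ => ?_)
  split_ifs with he
  · by_contra hx
    exact h ⟨e, hx, he⟩
  · rfl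

lemma add_self_zmodTwo {α : Type*} (f : α → ZMod 2) : f + f = 0 :=
  funext fun _ => CharTwo.add_self_eq_zero _

/-- `u` and `v` lie in the same connected component of the graph with edge set `E`. -/
def Linked (E : Set (GridEdge L)) (u v : Fin 3 → Fin L) : Prop :=
  ∃ z : GridEdge L → ZMod 2, support z ⊆ E ∧ d1 L z = Pi.single u 1 + Pi.single v 1

namespace Linked

variable {E F : Set (GridEdge L)} {u v w : Fin 3 → Fin L}

lemma refl (E : Set (GridEdge L)) (u : Fin 3 → Fin L) : Linked E u u :=
  ⟨0, by simp, by rw [d1_zero, add_self_zmodTwo]⟩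

lemma symm (h : Linked E u v) : Linked E v u := by
  obtain ⟨z, hzE, hz⟩ := h
  exact ⟨z, hzE, hz.trans (add_comm _ _)⟩

lemma trans (h₁ : Linked E u v) (h₂ : Linked E v w) : Linked E u w := by
  obtain ⟨z₁, hz₁E, hz₁⟩ := h₁
  obtain ⟨z₂, hz₂E, hz₂⟩ := h₂
  refine ⟨z₁ + z₂, (support_add z₁ z₂).trans (Set.union_subset hz₁E hz₂E), ?_⟩
  rw [d1_add, hz₁, hz₂, add_assoc, ← add_assoc (Pi.single v 1), add_self_zmodTwo,
    zero_add]

lemma mono (h : Linked E u v) (hEF : E ⊆ F) : Linked F u v := by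
  obtain ⟨z, hzE, hz⟩ := h
  exact ⟨z, hzE.trans hEF, hz⟩

end Linked

lemma linked_of_mem {E : Set (GridEdge L)} {e : GridEdge L} (he : e ∈ E) :
    Linked E e.1.1 e.upper := by
  refine ⟨Pi.single e 1, fun f hf => ?_, d1_single e⟩
  by_contra hfe
  exact hf (Pi.single_eq_of_ne (by rintro rfl; exact hfe he) 1)

lemma linked_update {E : Set (GridEdge L)} (u : Fin 3 → Fin L) (d : Fin 3) (t : Fin L)
    (hE : ∀ e : GridEdge L, e.1.2 = d → (∀ j ≠ d, e.1.1 j = u j) → e ∈ E) :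
    Linked E u (update u d t) := by
  have hL : 0 < L := Fin.pos t
  have from_zero : ∀ n (hn : n < L), Linked E (update u d ⟨0, hL⟩) (update u d ⟨n, hn⟩) := by
    intro n
    induction n with
    | zero => exact fun _ => Linked.refl E _
    | succ n ih =>
      intro hn
      let e : GridEdge L := ⟨(update u d ⟨n, by omega⟩, d), by simpa using hn⟩
      have he : e ∈ E := hE e rfl fun j hj => update_of_ne hj _ _
      have hup : e.upper = update u d ⟨n + 1, hn⟩ := by simp [e, GridEdge.upper]
      exact (ih (by omega)).trans (hup ▸ linked_of_mem he)
  simpa using (from_zero _ (u d).isLt).symm.trans (from_zero _ t.isLt)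

lemma exists_d1_eq_of_linked {E : Set (GridEdge L)} {V : Set (Fin 3 → Fin L)}
    (b : (Fin 3 → Fin L) → ZMod 2) (hbV : support b ⊆ V) (hb : ∑ v, b v = 0)
    (hV : ∀ u ∈ V, ∀ v ∈ V, Linked E u v) :
    ∃ z, support z ⊆ E ∧ d1 L z = b := by
  rcases eq_or_ne b 0 with rfl | hb0
  · exact ⟨0, by simp, d1_zero⟩
  obtain ⟨u, hu⟩ := Function.ne_iff.mp hb0
  have link : ∀ v, ∃ z : GridEdge L → ZMod 2,
      support z ⊆ E ∧ (v ∈ V → d1 L z = Pi.single v 1 + Pi.single u 1) := by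
    intro v
    by_cases hv : v ∈ V
    · obtain ⟨z, hzE, hz⟩ := hV v hv u (hbV hu)
      exact ⟨z, hzE, fun _ => hz⟩
    · exact ⟨0, by simp, fun h => absurd h hv⟩
  choose z hzE hz using link
  refine ⟨∑ v, b v • z v, ?_, ?_⟩
  · intro e he
    obtain ⟨v, -, hv⟩ := Set.mem_iUnion₂.mp
      (Finset.support_sum Finset.univ (fun v => b v • z v) (by simpa using he))
    exact hzE v (support_smul_subset_right _ _ hv)
  · have term : ∀ v, d1ₗ L (b v • z v) = Pi.single v (b v) + b v • Pi.single u 1 := by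
      intro v
      by_cases hv : v ∈ V
      · rw [map_smul, d1ₗ, LinearMap.coe_mk, AddHom.coe_mk, hz v hv, smul_add,
          ← Pi.single_smul', smul_eq_mul, mul_one]
      · have : b v = 0 := by_contra fun h => hv (hbV h)
        simp [this]
    change d1ₗ L (∑ v, b v • z v) = b
    rw [map_sum, Finset.sum_congr rfl fun v _ => term v, Finset.sum_add_distrib,
      Finset.univ_sum_single, ← Finset.sum_smul, hb, zero_smul, add_zero]

/-- The subcomplex with edges `E` and squares `S` has trivial first homology. -/
def CyclesBound (E : Set (GridEdge L)) (S : Set (GridSquare L)) : Prop :=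
  ∀ x : GridEdge L → ZMod 2, d1 L x = 0 → support x ⊆ E →
    ∃ y : GridSquare L → ZMod 2, support y ⊆ S ∧ d2 L y = x

lemma cyclesBound_empty : CyclesBound (∅ : Set (GridEdge L)) ∅ := by
  intro x _ hx
  refine ⟨0, by simp, ?_⟩
  ext e
  have : x e = 0 := by_contra fun h => hx h
  simp [d2, this]

/-- Mayer–Vietoris: gluing along a connected intersection creates no new 1-cycles. -/
theorem CyclesBound.union {EA EB : Set (GridEdge L)} {SA SB : Set (GridSquare L)}
    (hA : CyclesBound EA SA) (hB : CyclesBound EB SB)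
    (hAB : ∀ u ∈ vertices EA ∩ vertices EB, ∀ v ∈ vertices EA ∩ vertices EB,
      Linked (EA ∩ EB) u v) :
    CyclesBound (EA ∪ EB) (SA ∪ SB) := by
  intro x hx hxE
  set xA := EA.indicator x
  set xB := x - xA
  have hxA : support xA ⊆ EA := Set.support_indicator_subset
  have hxB : support xB ⊆ EB := by
    intro e he
    by_cases heA : e ∈ EA
    · simp [xB, xA, heA] at he
    · exact (hxE (by simpa [xB, xA, heA] using he)).resolve_left heA
  have hsplit : d1 L xB = d1 L xA := by
    have h := d1_add xA xB
    rw [add_sub_cancel, hx] at h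
    calc d1 L xB = d1 L xA + d1 L xA + d1 L xB := by rw [add_self_zmodTwo, zero_add]
      _ = d1 L xA := by rw [add_assoc, ← h, add_zero]
  obtain ⟨z, hzE, hz⟩ := exists_d1_eq_of_linked (V := vertices EA ∩ vertices EB) (d1 L xA)
    (fun v hv => ⟨support_d1_subset xA |>.trans (vertices_mono hxA) <| hv,
      support_d1_subset xB |>.trans (vertices_mono hxB) <| hsplit ▸ hv⟩)
    (sum_d1_apply_eq_zero xA) hAB
  obtain ⟨yA, hyA, hdyA⟩ := hA (xA + z) (by rw [d1_add, hz, add_self_zmodTwo])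
    ((support_add _ _).trans (Set.union_subset hxA (hzE.trans Set.inter_subset_left)))
  obtain ⟨yB, hyB, hdyB⟩ := hB (xB + z) (by rw [d1_add, hz, hsplit, add_self_zmodTwo])
    ((support_add _ _).trans (Set.union_subset hxB (hzE.trans Set.inter_subset_right)))
  refine ⟨yA + yB, (support_add _ _).trans (Set.union_subset_union hyA hyB), ?_⟩
  rw [d2_add, hdyA, hdyB, add_add_add_comm, add_self_zmodTwo, add_zero, add_sub_cancel]

lemma eq_or_eq_or_eq_of_fin_three {i j k : Fin 3} (hij : i ≠ j) (hik : i ≠ k) (hjk : j ≠ k)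
    (l : Fin 3) : l = i ∨ l = j ∨ l = k := by
  revert i j k l; decide

lemma eq_of_val_apply_eq_of_fin_three {i j k : Fin 3} (hij : i ≠ j) (hik : i ≠ k) (hjk : j ≠ k)
    {u v : Fin 3 → Fin L} (hi : (u i : ℕ) = v i) (hj : (u j : ℕ) = v j) (hk : (u k : ℕ) = v k) :
    u = v := by
  funext l
  rcases eq_or_eq_or_eq_of_fin_three hij hik hjk l with rfl | rfl | rfl <;> exact Fin.ext ‹_›

lemma GridEdge.upper_val (e : GridEdge L) (l : Fin 3) :
    (e.upper l : ℕ) = e.1.1 l + if l = e.1.2 then 1 else 0 := by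
  split_ifs with h
  · exact h ▸ e.upper_apply_self
  · simp [e.upper_apply_of_ne h]

/-- `p - e_j`, truncated: `stepDown p j = p` when `p j = 0`. -/
def stepDown (p : Fin 3 → Fin L) (j : Fin 3) : Fin 3 → Fin L :=
  update p j ⟨(p j : ℕ) - 1, by omega⟩

lemma stepDown_apply_of_ne (p : Fin 3 → Fin L) {j l : Fin 3} (h : l ≠ j) :
    stepDown p j l = p l :=
  update_of_ne h _ _

lemma stepDown_val (p : Fin 3 → Fin L) (j l : Fin 3) :
    (stepDown p j l : ℕ) = if l = j then (p j : ℕ) - 1 else p l := by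
  split_ifs with h
  · subst h; simp [stepDown]
  · rw [stepDown_apply_of_ne p h]

lemma stepAt_iff_eq_stepDown {j : Fin 3} {u v : Fin 3 → Fin L} :
    stepAt j u v ↔ 1 ≤ (v j : ℕ) ∧ u = stepDown v j := by
  constructor
  · rintro ⟨hne, hj⟩
    refine ⟨by omega, funext fun l => Fin.ext ?_⟩
    rw [stepDown_val]
    split_ifs with h
    · subst h; omega
    · rw [hne l h]
  · rintro ⟨hj, rfl⟩
    refine ⟨fun l hl => Fin.ext ?_, ?_⟩ <;> simp [stepDown_val, *]

section Ray

variable {i j k : Fin 3} (x : GridEdge L → ZMod 2)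

/-- The flux of `x` in direction `i` through the part of the `j`-line through `p` at or below
`p`. -/
noncomputable def ray (i j k : Fin 3) (p : Fin 3 → Fin L) : ZMod 2 :=
  ∑ e : GridEdge L, if e.1.2 = i ∧ (e.1.1 i : ℕ) = p i ∧ (e.1.1 k : ℕ) = p k ∧
    (e.1.1 j : ℕ) ≤ p j then x e else 0

/-- Both rays are the flux of `x` out of the quadrant below `p` in its `k`-level. -/
lemma ray_comm (hij : i ≠ j) (hik : i ≠ k) (hjk : j ≠ k) (hx : d1 L x = 0)
    (hxk : ∀ e ∈ support x, e.1.2 ≠ k) (p : Fin 3 → Fin L) :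
    ray x i j k p = ray x j i k p := by
  have hflux := sum_d1_apply_mem
    (Finset.univ.filter fun v => (v i : ℕ) ≤ p i ∧ (v j : ℕ) ≤ p j ∧ (v k : ℕ) = p k) x
  simp only [hx, Pi.zero_apply, Finset.sum_const_zero] at hflux
  have hedge : ∀ e : GridEdge L,
      ((if e.1.1 ∈ Finset.univ.filter fun v => (v i : ℕ) ≤ p i ∧ (v j : ℕ) ≤ p j ∧
          (v k : ℕ) = p k then x e else 0) +
        if e.upper ∈ Finset.univ.filter fun v => (v i : ℕ) ≤ p i ∧ (v j : ℕ) ≤ p j ∧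
          (v k : ℕ) = p k then x e else 0) =
      (if e.1.2 = i ∧ (e.1.1 i : ℕ) = p i ∧ (e.1.1 k : ℕ) = p k ∧ (e.1.1 j : ℕ) ≤ p j
        then x e else 0) +
      if e.1.2 = j ∧ (e.1.1 j : ℕ) = p j ∧ (e.1.1 k : ℕ) = p k ∧ (e.1.1 i : ℕ) ≤ p i
        then x e else 0 := by
    intro e
    by_cases hxe : x e = 0
    · simp [hxe]
    have hd := hxk e hxe
    simp only [Finset.mem_filter, Finset.mem_univ, true_and, GridEdge.upper_val]
    rcases eq_or_eq_or_eq_of_fin_three hij hik hjk e.1.2 with hd' | hd' | hd' <;>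
      simp only [hd', hij, hij.symm, hik, hik.symm, hjk, hjk.symm, if_true, if_false, add_zero,
        true_and, false_and] <;>
      first
      | exact absurd hd' hd
      | split_ifs <;> first | omega | simp [CharTwo.add_self_eq_zero]
  rw [Finset.sum_congr rfl fun e _ => hedge e, Finset.sum_add_distrib] at hflux
  exact CharTwo.add_eq_zero.mp hflux.symm

lemma ray_eq_zero_of_le {p : Fin 3 → Fin L} (hp : L ≤ (p i : ℕ) + 1) : ray x i j k p = 0 :=
  Finset.sum_eq_zero fun e _ => if_neg fun ⟨hd, hi, _⟩ => by
    have := e.2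
    rw [hd] at this
    omega

lemma ray_lower (hij : i ≠ j) (hik : i ≠ k) (hjk : j ≠ k) (e : GridEdge L) (he : e.1.2 = i) :
    ray x i j k e.1.1 =
      x e + if 1 ≤ (e.1.1 j : ℕ) then ray x i j k (stepDown e.1.1 j) else 0 := by
  have hsplit : ∀ f : GridEdge L,
      (if f.1.2 = i ∧ (f.1.1 i : ℕ) = e.1.1 i ∧ (f.1.1 k : ℕ) = e.1.1 k ∧
        (f.1.1 j : ℕ) ≤ e.1.1 j then x f else 0) =
      (if e = f then x f else 0) +
        if 1 ≤ (e.1.1 j : ℕ) then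
          (if f.1.2 = i ∧ (f.1.1 i : ℕ) = stepDown e.1.1 j i ∧
            (f.1.1 k : ℕ) = stepDown e.1.1 j k ∧ (f.1.1 j : ℕ) ≤ stepDown e.1.1 j j
          then x f else 0)
        else 0 := by
    intro f
    have hef : e = f ↔ f.1.2 = i ∧ (f.1.1 i : ℕ) = e.1.1 i ∧ (f.1.1 k : ℕ) = e.1.1 k ∧
        (f.1.1 j : ℕ) = e.1.1 j := by
      constructor
      · rintro rfl; exact ⟨he, rfl, rfl, rfl⟩
      · rintro ⟨hd, hi, hk, hj⟩
        exact Subtype.ext <|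
          Prod.ext (eq_of_val_apply_eq_of_fin_three hij hik hjk hi hj hk).symm (he.trans hd.symm)
    simp only [hef, stepDown_val, if_true]
    split_ifs <;> first | omega | simp
  rw [ray, Finset.sum_congr rfl fun f _ => hsplit f, Finset.sum_add_distrib,
    Fintype.sum_ite_eq]
  split_ifs <;> simp [ray]

lemma ray_add_ray_stepDown (hij : i ≠ j) (hik : i ≠ k) (hjk : j ≠ k) (hx : d1 L x = 0)
    (hxk : ∀ e ∈ support x, e.1.2 ≠ k) (e : GridEdge L) (he : e.1.2 = i) :
    ((if (e.1.1 j : ℕ) + 1 < L then ray x i j k e.1.1 else 0) +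
      if 1 ≤ (e.1.1 j : ℕ) then ray x i j k (stepDown e.1.1 j) else 0) = x e := by
  have hlow := ray_lower x hij hik hjk e he
  by_cases htop : (e.1.1 j : ℕ) + 1 < L
  · rw [if_pos htop, hlow, add_assoc, CharTwo.add_self_eq_zero, add_zero]
  · rw [ray_comm x hij hik hjk hx hxk, ray_eq_zero_of_le x (by omega)] at hlow
    rw [if_neg htop, zero_add]
    exact (CharTwo.add_eq_zero.mp hlow.symm).symm

end Ray

noncomputable def cornerChain (a b : Fin 3) (G : (Fin 3 → Fin L) → ZMod 2) :
    GridSquare L → ZMod 2 :=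
  fun s => if s.1.2 = (a, b) then G s.1.1 else 0

lemma sum_gridSquare_ite_eq (t : (Fin 3 → Fin L) × Fin 3 × Fin 3) (c : ZMod 2) :
    ∑ s : GridSquare L, (if s.1 = t then c else 0) =
      if t.2.1 < t.2.2 ∧ (t.1 t.2.1 : ℕ) + 1 < L ∧ (t.1 t.2.2 : ℕ) + 1 < L then c else 0 := by
  split_ifs with ht
  · simpa [Subtype.ext_iff] using Fintype.sum_ite_eq' (⟨t, ht⟩ : GridSquare L) fun _ => c
  · exact Finset.sum_eq_zero fun s _ => if_neg fun hs : s.1 = t => ht (hs ▸ s.2)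

lemma bdryEdge_iff {a b i j : Fin 3} (hab : a < b) (hij : (i = a ∧ j = b) ∨ (i = b ∧ j = a))
    {s : GridSquare L} (hs : s.1.2 = (a, b)) {e : GridEdge L} (he : e.1.2 = i) :
    s.bdryEdge e ↔ s.1.1 = e.1.1 ∨ stepAt j s.1.1 e.1.1 := by
  have ha : s.1.2.1 = a := by rw [hs]
  have hb : s.1.2.2 = b := by rw [hs]
  rcases hij with ⟨rfl, rfl⟩ | ⟨rfl, rfl⟩ <;>
    simp [GridSquare.bdryEdge, ha, hb, he, hab.ne, hab.ne', eq_comm]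

lemma d2_cornerChain_apply {a b i j : Fin 3} (hab : a < b)
    (hij : (i = a ∧ j = b) ∨ (i = b ∧ j = a)) (G : (Fin 3 → Fin L) → ZMod 2)
    (e : GridEdge L) (he : e.1.2 = i) :
    d2 L (cornerChain a b G) e =
      (if (e.1.1 j : ℕ) + 1 < L then G e.1.1 else 0) +
        if 1 ≤ (e.1.1 j : ℕ) then G (stepDown e.1.1 j) else 0 := by
  have hi : (e.1.1 i : ℕ) + 1 < L := he ▸ e.2
  have hji : j ≠ i := by rcases hij with ⟨rfl, rfl⟩ | ⟨rfl, rfl⟩ <;> simp [hab.ne, hab.ne']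
  have hterm : ∀ s : GridSquare L, (if s.bdryEdge e then cornerChain a b G s else 0) =
      (if s.1 = (e.1.1, a, b) then G e.1.1 else 0) +
        if 1 ≤ (e.1.1 j : ℕ) then
          (if s.1 = (stepDown e.1.1 j, a, b) then G (stepDown e.1.1 j) else 0) else 0 := by
    intro s
    by_cases hs : s.1.2 = (a, b)
    · have hs' : ∀ p, s.1 = (p, a, b) ↔ s.1.1 = p := fun p => by
        rw [← hs]; exact ⟨fun h => h ▸ rfl, fun h => h ▸ rfl⟩
      simp only [bdryEdge_iff hab hij hs he, stepAt_iff_eq_stepDown, cornerChain, hs, hs',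
        if_true]
      by_cases hj : 1 ≤ (e.1.1 j : ℕ)
      · have hne : stepDown e.1.1 j ≠ e.1.1 := fun h => by
          have := congrArg (fun p => (p j : ℕ)) h
          simp only [stepDown_val, if_true] at this
          omega
        by_cases h₁ : s.1.1 = e.1.1
        · simp [h₁, hne.symm]
        · by_cases h₂ : s.1.1 = stepDown e.1.1 j <;> simp [h₁, h₂, hj, hne]
      · by_cases h₁ : s.1.1 = e.1.1 <;> simp [h₁, hj]
    · have hne : ∀ p, s.1 ≠ (p, a, b) := fun p h => hs (h ▸ rfl)
      simp [cornerChain, hs, hne]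
  rw [d2, Finset.sum_congr rfl fun s _ => hterm s, Finset.sum_add_distrib,
    sum_gridSquare_ite_eq]
  congr 1
  · rcases hij with ⟨rfl, rfl⟩ | ⟨rfl, rfl⟩ <;> simp [hab, hi]
  · split_ifs with hj
    · rw [sum_gridSquare_ite_eq, if_pos]
      refine ⟨hab, ?_⟩
      rcases hij with ⟨rfl, rfl⟩ | ⟨rfl, rfl⟩ <;> simp [stepDown_val, hab.ne, hab.ne'] <;> omega
    · simp

lemma d2_cornerChain_apply_of_ne {a b : Fin 3} (G : (Fin 3 → Fin L) → ZMod 2) (e : GridEdge L)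
    (ha : e.1.2 ≠ a) (hb : e.1.2 ≠ b) : d2 L (cornerChain a b G) e = 0 := by
  refine Finset.sum_eq_zero fun s _ => ?_
  by_cases hs : s.1.2 = (a, b)
  · refine if_neg fun hbd => ?_
    have : e.1.2 = s.1.2.1 ∨ e.1.2 = s.1.2.2 := by
      rcases hbd with ⟨-, h⟩ | ⟨h, -⟩ | ⟨h, -⟩ <;> tauto
    rw [hs] at this
    tauto
  · simp [cornerChain, hs]

def planeEdges (k : Fin 3) (c : Fin L) : Set (GridEdge L) := {e | e.1.2 ≠ k ∧ e.1.1 k = c}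

def planeSquares (k : Fin 3) (c : Fin L) : Set (GridSquare L) :=
  {s | s.1.2.1 ≠ k ∧ s.1.2.2 ≠ k ∧ s.1.1 k = c}

theorem cyclesBound_plane (k : Fin 3) (c : Fin L) :
    CyclesBound (planeEdges k c) (planeSquares k c) := by
  obtain ⟨a, b, hab, hak, hbk⟩ : ∃ a b : Fin 3, a < b ∧ a ≠ k ∧ b ≠ k := by revert k; decide
  intro x hx hxE
  have hxk : ∀ e ∈ support x, e.1.2 ≠ k := fun e he => (hxE he).1
  refine ⟨cornerChain a b fun p => if p k = c then ray x a b k p else 0, fun s hs => ?_, ?_⟩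
  · simp only [cornerChain, mem_support, ne_eq, ite_eq_right_iff, not_forall] at hs
    obtain ⟨hsab, hsc, -⟩ := hs
    simp only [planeSquares, Set.mem_ofPred_eq, hsab]
    exact ⟨hak, hbk, hsc⟩
  have hdir : ∀ e : GridEdge L, ∀ i j, ((i = a ∧ j = b) ∨ (i = b ∧ j = a)) → e.1.2 = i →
      d2 L (cornerChain a b fun p => if p k = c then ray x a b k p else 0) e = x e := by
    intro e i j hij hi
    obtain ⟨hij', hik, hjk⟩ : i ≠ j ∧ i ≠ k ∧ j ≠ k := by
      rcases hij with ⟨rfl, rfl⟩ | ⟨rfl, rfl⟩ <;> simp [hab.ne, hab.ne', hak, hbk]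
    have hray : ∀ p, ray x a b k p = ray x i j k p := by
      rcases hij with ⟨rfl, rfl⟩ | ⟨rfl, rfl⟩
      · exact fun p => rfl
      · exact ray_comm x hab.ne hak hbk hx hxk
    rw [d2_cornerChain_apply hab hij _ e hi]
    by_cases hc : e.1.1 k = c
    · simp only [hc, stepDown_apply_of_ne _ hjk.symm, if_true, hray]
      exact ray_add_ray_stepDown x hij' hik hjk hx hxk e hi
    · have : x e = 0 := by_contra fun h => hc (hxE h).2
      simp [hc, stepDown_apply_of_ne _ hjk.symm, this]
  ext e
  rcases eq_or_eq_or_eq_of_fin_three hab.ne hak hbk e.1.2 with hd | hd | hd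
  · exact hdir e a b (Or.inl ⟨rfl, rfl⟩) hd
  · exact hdir e b a (Or.inr ⟨rfl, rfl⟩) hd
  · have : x e = 0 := by_contra fun h => hxk e h hd
    rw [this, d2_cornerChain_apply_of_ne _ e (hd ▸ hak.symm) (hd ▸ hbk.symm)]

/-- The plane `{v | v k = c}` is encoded as the pair `(k, c)`. -/
def planesEdges (S : Set (Fin 3 × Fin L)) : Set (GridEdge L) := ⋃ P ∈ S, planeEdges P.1 P.2

def planesSquares (S : Set (Fin 3 × Fin L)) : Set (GridSquare L) :=
  ⋃ P ∈ S, planeSquares P.1 P.2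

lemma apply_eq_of_mem_vertices_planeEdges {k : Fin 3} {c : Fin L} {v : Fin 3 → Fin L}
    (hv : v ∈ vertices (planeEdges k c)) : v k = c := by
  obtain ⟨e, ⟨hek, hec⟩, hv⟩ := hv
  rcases hv with rfl | rfl
  exacts [hec, (e.upper_apply_of_ne (Ne.symm hek)).trans hec]

lemma exists_apply_eq_of_mem_vertices_planesEdges {S : Set (Fin 3 × Fin L)}
    {v : Fin 3 → Fin L} (hv : v ∈ vertices (planesEdges S)) : ∃ P ∈ S, v P.1 = P.2 := by
  obtain ⟨e, he, hev⟩ := hv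
  obtain ⟨P, hP, heP⟩ := Set.mem_iUnion₂.mp he
  exact ⟨P, hP, apply_eq_of_mem_vertices_planeEdges ⟨e, heP, hev⟩⟩

lemma planeEdges_inter_subset {S : Set (Fin 3 × Fin L)} {l : Fin 3} {c' : Fin L}
    (h : (l, c') ∈ S) (k : Fin 3) (c : Fin L) :
    planeEdges k c ∩ planeEdges l c' ⊆ planeEdges k c ∩ planesEdges S :=
  Set.inter_subset_inter_right _ (Set.subset_biUnion_of_mem (u := fun P => planeEdges P.1 P.2) h)

lemma linked_update_of_mem_planes {k l d : Fin 3} {c c' : Fin L} {u : Fin 3 → Fin L}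
    (hk : u k = c) (hl : u l = c') (hdk : d ≠ k) (hdl : d ≠ l) (t : Fin L) :
    Linked (planeEdges k c ∩ planeEdges l c') u (update u d t) :=
  linked_update u d t fun _ hed heu =>
    ⟨⟨hed ▸ hdk, (heu k hdk.symm).trans hk⟩, ⟨hed ▸ hdl, (heu l hdl.symm).trans hl⟩⟩

theorem cyclesBound_insert {S : Set (Fin 3 × Fin L)} {k : Fin 3} {c : Fin L}
    (hS : CyclesBound (planesEdges S) (planesSquares S)) (g : Fin 3 → Fin L)
    (hg : ∀ u : Fin 3 → Fin L, u k = c → (∃ P ∈ S, u P.1 = P.2) →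
      Linked (planeEdges k c ∩ planesEdges S) u g) :
    CyclesBound (planesEdges (insert (k, c) S)) (planesSquares (insert (k, c) S)) := by
  rw [planesEdges, planesSquares, Set.biUnion_insert, Set.biUnion_insert]
  refine (cyclesBound_plane k c).union hS fun u hu v hv => ?_
  have link : ∀ w ∈ vertices (planeEdges k c) ∩ vertices (planesEdges S),
      Linked (planeEdges k c ∩ planesEdges S) w g := fun w ⟨hwP, hwS⟩ =>
    hg w (apply_eq_of_mem_vertices_planeEdges hwP)
      (exists_apply_eq_of_mem_vertices_planesEdges hwS)
  exact (link u hu).trans (link v hv).symm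

/-- The route runs along two lines: first inside the plane of `S` through `u`, then inside a
plane through `q`. -/
lemma linked_update_of_axisPlanes_mem {S : Set (Fin 3 × Fin L)} (q : Fin 3 → Fin L) {k : Fin 3}
    {c : Fin L} (hq : ∀ l ≠ k, (l, q l) ∈ S) {u : Fin 3 → Fin L} (hu : u k = c)
    (huS : ∃ P ∈ S, u P.1 = P.2) :
    Linked (planeEdges k c ∩ planesEdges S) u (update q k c) := by
  obtain ⟨⟨l, c'⟩, hP, hul⟩ := huS
  have directions : ∀ k l : Fin 3, ∃ l₁ l₂ : Fin 3, l₁ ≠ k ∧ l₁ ≠ l ∧ l₂ ≠ k ∧ l₂ ≠ l₁ := by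
    decide
  obtain ⟨l₁, l₂, hl₁k, hl₁l, hl₂k, hl₂l₁⟩ := directions k l
  set w := update u l₁ (q l₁)
  have leg₁ : Linked (planeEdges k c ∩ planesEdges S) u w :=
    (linked_update_of_mem_planes hu hul hl₁k hl₁l _).mono (planeEdges_inter_subset hP k c)
  have leg₂ : Linked (planeEdges k c ∩ planesEdges S) w (update w l₂ (q l₂)) :=
    (linked_update_of_mem_planes (l := l₁) (by simp [w, update_of_ne hl₁k.symm, hu])
      (by simp [w]) hl₂k hl₂l₁ _).mono (planeEdges_inter_subset (hq l₁ hl₁k) k c)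
  have hend : update w l₂ (q l₂) = update q k c := by
    funext j
    rcases eq_or_eq_or_eq_of_fin_three hl₁k.symm hl₂k.symm hl₂l₁.symm j with rfl | rfl | rfl <;>
      simp [w, update_of_ne, hl₁k, hl₂k, hl₁k.symm, hl₂k.symm, hl₂l₁.symm, hu]
  exact leg₁.trans (hend ▸ leg₂)

def axisPlanes (q : Fin 3 → Fin L) : Set (Fin 3 × Fin L) := {(0, q 0), (1, q 1), (2, q 2)}

lemma cyclesBound_axisPlanes (q : Fin 3 → Fin L) :
    CyclesBound (planesEdges (axisPlanes q)) (planesSquares (axisPlanes q)) := by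
  have h₂ := cyclesBound_insert (S := ∅) (k := 2) (c := q 2)
    (by simpa [planesEdges, planesSquares] using cyclesBound_empty) q
    (fun _ _ ⟨_, hP, _⟩ => absurd hP (Set.notMem_empty _))
  rw [LawfulSingleton.insert_empty_eq] at h₂
  have h₁₂ := cyclesBound_insert (k := 1) (c := q 1) h₂ q fun u hu ⟨P, hP, huP⟩ => by
    obtain rfl := Set.mem_singleton_iff.mp hP
    have hq : update u 0 (q 0) = q := by
      funext j; fin_cases j <;> simp [hu, huP]
    have h := (linked_update_of_mem_planes (d := 0) hu huP (by simp) (by simp) (q 0)).mono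
      (planeEdges_inter_subset (Set.mem_singleton _) 1 (q 1))
    rwa [hq] at h
  exact cyclesBound_insert h₁₂ _ fun u hu huS =>
    linked_update_of_axisPlanes_mem q (fun l hl => by fin_cases l <;> simp_all) hu huS

lemma mem_axisPlanes (q : Fin 3 → Fin L) (l : Fin 3) : (l, q l) ∈ axisPlanes q := by
  fin_cases l <;> simp [axisPlanes]

theorem cyclesBound_of_axisPlanes_subset (q : Fin 3 → Fin L) {S : Set (Fin 3 × Fin L)}
    (hq : ∀ l, (l, q l) ∈ S) : CyclesBound (planesEdges S) (planesSquares S) := by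
  have grow : ∀ R : Finset (Fin 3 × Fin L),
      CyclesBound (planesEdges (↑R ∪ axisPlanes q)) (planesSquares (↑R ∪ axisPlanes q)) := by
    intro R
    induction R using Finset.induction_on with
    | empty => simpa using cyclesBound_axisPlanes q
    | insert P R _ ih =>
      rw [Finset.coe_insert, Set.insert_union]
      exact cyclesBound_insert ih _ fun u hu huS =>
        linked_update_of_axisPlanes_mem q (fun l _ => Or.inr (mem_axisPlanes q l)) hu huS
  have hS : ↑S.toFinite.toFinset ∪ axisPlanes q = S := by
    rw [Set.Finite.coe_toFinset, Set.union_eq_self_of_subset_right]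
    rintro P (rfl | rfl | rfl) <;> apply hq
  exact hS ▸ grow S.toFinite.toFinset

lemma mem_starPlane_iff {q v : Fin 3 → Fin L} : v ∈ starPlane q ↔ ∃ l, v l = q l := by
  constructor
  · intro h
    by_contra hne
    have huniv : {k | v k ≠ q k} = Set.univ := Set.eq_univ_of_forall fun l hl => hne ⟨l, hl⟩
    rw [starPlane, Set.mem_ofPred_eq, huniv, Set.ncard_univ, Nat.card_eq_fintype_card,
      Fintype.card_fin] at h
    omega
  · rintro ⟨l, hl⟩
    calc _ ≤ ({l}ᶜ : Set (Fin 3)).ncard := Set.ncard_le_ncard fun k hk => by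
          rintro rfl
          exact hk hl
      _ = 2 := by rw [Set.ncard_compl]; simp

/-- If the lower endpoint shares with `q` only the coordinate along the edge, the upper endpoint
shares another one. -/
lemma exists_mem_planeEdges_of_mem_starPlane {q : Fin 3 → Fin L} {e : GridEdge L}
    (h₁ : e.1.1 ∈ starPlane q) (h₂ : e.upper ∈ starPlane q) : ∃ l, e ∈ planeEdges l (q l) := by
  obtain ⟨l₁, hl₁⟩ := mem_starPlane_iff.mp h₁
  by_cases hd₁ : l₁ = e.1.2
  · obtain ⟨l₂, hl₂⟩ := mem_starPlane_iff.mp h₂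
    have hd₂ : l₂ ≠ e.1.2 := by
      rintro rfl
      have := e.upper_apply_self
      rw [hl₂, ← hd₁, hl₁] at this
      omega
    exact ⟨l₂, Ne.symm hd₂, (e.upper_apply_of_ne hd₂).symm.trans hl₂⟩
  · exact ⟨l₁, Ne.symm hd₁, hl₁⟩

lemma GridSquare.corner_apply_of_mem_planeSquares {s : GridSquare L} {k : Fin 3} {c : Fin L}
    (hs : s ∈ planeSquares k c) {v : Fin 3 → Fin L} (hv : s.corner v) : v k = c := by
  obtain ⟨h₁, h₂, hc⟩ := hs
  rcases hv with rfl | hv | hv | ⟨w, hw, hv⟩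
  · exact hc
  · exact (hv.1 k (Ne.symm h₁)).trans hc
  · exact (hv.1 k (Ne.symm h₂)).trans hc
  · exact (hv.1 k (Ne.symm h₂)).trans ((hw.1 k (Ne.symm h₁)).trans hc)

end

theorem stmt13_general (L m : ℕ) (qs : Fin m → (Fin 3 → Fin L))
    (x : GridEdge L → ZMod 2)
    (hsupp : ∀ e : GridEdge L, x e ≠ 0 →
      ∃ i : Fin m, e.1.1 ∈ starPlane (qs i) ∧ e.upper ∈ starPlane (qs i))
    (hcycle : d1 L x = 0) :
    ∃ y : GridSquare L → ZMod 2,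
      (∀ s : GridSquare L, y s ≠ 0 →
        ∃ i : Fin m, ∀ v : Fin 3 → Fin L, s.corner v → v ∈ starPlane (qs i)) ∧
      d2 L y = x := by
  set S : Set (Fin 3 × Fin L) := Set.range fun il : Fin m × Fin 3 => (il.2, qs il.1 il.2)
  have hS : CyclesBound (planesEdges S) (planesSquares S) := by
    rcases Nat.eq_zero_or_pos m with rfl | hm
    · simpa [S, planesEdges, planesSquares] using cyclesBound_empty
    · exact cyclesBound_of_axisPlanes_subset (qs ⟨0, hm⟩) fun l => ⟨(⟨0, hm⟩, l), rfl⟩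
  obtain ⟨y, hyS, hy⟩ := hS x hcycle fun e he => by
    obtain ⟨i, h₁, h₂⟩ := hsupp e he
    obtain ⟨l, hl⟩ := exists_mem_planeEdges_of_mem_starPlane h₁ h₂
    exact Set.mem_biUnion (x := (l, qs i l)) ⟨(i, l), rfl⟩ hl
  refine ⟨y, fun s hs => ?_, hy⟩
  obtain ⟨_, ⟨⟨i, l⟩, rfl⟩, hsP⟩ := Set.mem_iUnion₂.mp (hyS hs)
  exact ⟨i, fun v hv =>
    mem_starPlane_iff.mpr ⟨l, GridSquare.corner_apply_of_mem_planeSquares hsP hv⟩⟩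

/-- **Unions of star planes in `[L]³` have trivial first homology over `𝔽₂`.**
If the 1-chain `x` is supported on the edges of `Λ(q₁) ∪ ⋯ ∪ Λ(q_m)` (meaning
each edge in its support has both endpoints in some `Λ(qᵢ)`) and `∂₁ x = 0`,
then `x = ∂₂ y` for a 2-chain `y` supported on squares all of whose corners lie
in some `Λ(qᵢ)`. -/
theorem stmt13 (L m : ℕ) (hm : 1 ≤ m) (qs : Fin m → (Fin 3 → Fin L))
    (x : GridEdge L → ZMod 2)
    (hsupp : ∀ e : GridEdge L, x e ≠ 0 →
      ∃ i : Fin m, e.1.1 ∈ starPlane (qs i) ∧ e.upper ∈ starPlane (qs i))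
    (hcycle : d1 L x = 0) :
    ∃ y : GridSquare L → ZMod 2,
      (∀ s : GridSquare L, y s ≠ 0 →
        ∃ i : Fin m, ∀ v : Fin 3 → Fin L, s.corner v → v ∈ starPlane (qs i)) ∧
      d2 L y = x :=
  stmt13_general L m qs x hsupp hcycle
end

section
/- Let L, ρ, m, κ be natural numbers, S a finite nonempty type, P a finite type, and γ : S → P → (Fin 3 → Fin L) a family of maps such that for every s ∈ S and every point v ∈ [L]³, the number of p ∈ P with γ s p = v is at most ρ. Let X be a finite type and R : X → Finset P with (R x).card ≤ m for every x, and with the number of x ∈ X such that p ∈ R x at most κ for every p ∈ P. For x ∈ X, define EdgeSet(x) to be the union over s ∈ S and p ∈ R x of the set of grid edges both of whose endpoints lie in λ(γ s p). Then there exists a coloring η : X → Fin (3·|S|²·m·κ·ρ·L + 1) such that for all distinct x, x' ∈ X with η x = η x', the sets EdgeSet(x) and EdgeSet(x') are disjoint. -/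
/-- Two points of the grid `[L]^D` are adjacent in the grid graph iff they agree
in all but exactly one coordinate, where they differ by exactly 1. -/
def gridAdj {L D : ℕ} (u v : Fin D → Fin L) : Prop :=
  ∃ i : Fin D, (∀ j : Fin D, j ≠ i → u j = v j) ∧
    ((u i : ℕ) + 1 = (v i : ℕ) ∨ (v i : ℕ) + 1 = (u i : ℕ))

/-- The star graph `λ(q)`: points of the grid agreeing with `q` in all but at
most one coordinate. -/
def starGraph {L D : ℕ} (q : Fin D → Fin L) : Set (Fin D → Fin L) :=
  { p | Set.ncard { i : Fin D | p i ≠ q i } ≤ 1 }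

/-- The set of grid edges (as unordered pairs) both of whose endpoints lie in
the set `T` of grid points. -/
def edgesIn {L D : ℕ} (T : Set (Fin D → Fin L)) : Set (Sym2 (Fin D → Fin L)) :=
  { e | ∃ u v : Fin D → Fin L, e = s(u, v) ∧ gridAdj u v ∧ u ∈ T ∧ v ∈ T }

section Aux

open Classical

/-- Greedy coloring for a finite symmetric irreflexive relation of bounded degree. -/
lemma greedy_coloring {X : Type} [Fintype X] (A : X → X → Prop)
    (hsym : ∀ x y, A x y → A y x) (hirr : ∀ x, ¬ A x x) (N : ℕ)
    (hdeg : ∀ x, (Finset.univ.filter fun y => A x y).card ≤ N) :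
    ∃ f : X → Fin (N + 1), ∀ x y, A x y → f x ≠ f y := by
  classical
  suffices h : ∀ s : Finset X, ∃ f : X → Fin (N + 1),
      ∀ x ∈ s, ∀ y ∈ s, A x y → f x ≠ f y by
    obtain ⟨f, hf⟩ := h Finset.univ
    exact ⟨f, fun x y h => hf x (Finset.mem_univ x) y (Finset.mem_univ y) h⟩
  intro s
  induction s using Finset.induction with
  | empty => exact ⟨fun _ => 0, by simp⟩
  | @insert a s ha ih =>
    obtain ⟨f, hf⟩ := ih
    have hC : ((s.filter (A a)).image f).card < Fintype.card (Fin (N + 1)) := by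
      calc ((s.filter (A a)).image f).card ≤ (s.filter (A a)).card :=
            Finset.card_image_le
        _ ≤ (Finset.univ.filter fun y => A a y).card := by
            apply Finset.card_le_card
            intro y hy
            simp only [Finset.mem_filter] at hy ⊢
            exact ⟨Finset.mem_univ y, hy.2⟩
        _ ≤ N := hdeg a
        _ < N + 1 := Nat.lt_succ_self N
        _ = Fintype.card (Fin (N + 1)) := (Fintype.card_fin _).symm
    have hex : ∃ c : Fin (N + 1), c ∉ (s.filter (A a)).image f := by
      by_contra hco
      push_neg at hco
      have hsub2 : (Finset.univ : Finset (Fin (N + 1))) ⊆ (s.filter (A a)).image f :=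
        fun c _ => hco c
      have := Finset.card_le_card hsub2
      rw [Finset.card_univ] at this
      omega
    obtain ⟨c, hc⟩ := hex
    refine ⟨Function.update f a c, ?_⟩
    intro x hx y hy hxy
    rcases Finset.mem_insert.mp hx with hxa | hxs
    · rcases Finset.mem_insert.mp hy with hya | hys
      · rw [hxa, hya] at hxy; exact absurd hxy (hirr a)
      · have hy' : y ≠ a := fun h => ha (h ▸ hys)
        rw [hxa, Function.update_self, Function.update_of_ne hy']
        intro h
        exact hc (Finset.mem_image.mpr ⟨y, Finset.mem_filter.mpr ⟨hys, hxa ▸ hxy⟩, h.symm⟩)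
    · rcases Finset.mem_insert.mp hy with hya | hys
      · have hx' : x ≠ a := fun h => ha (h ▸ hxs)
        rw [hya, Function.update_of_ne hx', Function.update_self]
        intro h
        exact hc (Finset.mem_image.mpr ⟨x, Finset.mem_filter.mpr ⟨hxs, hsym _ _ (hya ▸ hxy)⟩, h⟩)
      · have hx' : x ≠ a := fun h => ha (h ▸ hxs)
        have hy' : y ≠ a := fun h => ha (h ▸ hys)
        rw [Function.update_of_ne hx', Function.update_of_ne hy']
        exact hf x hxs y hys hxy

/-- Both endpoints of an edge of `λ(q)` lie on an axis line through `q`. -/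
lemma star_edge_on_line {L : ℕ} {q u v : Fin 3 → Fin L} {i : Fin 3}
    (hu : u ∈ starGraph q) (hv : v ∈ starGraph q)
    (hoff : ∀ j : Fin 3, j ≠ i → u j = v j) (hne : u i ≠ v i) :
    ∀ j : Fin 3, j ≠ i → u j = q j := by
  intro j hj
  by_contra huj
  -- the set of disagreement coords of u contains j, so u i = q i
  have hufin : ({k : Fin 3 | u k ≠ q k}).Finite := Set.toFinite _
  have hui : u i = q i := by
    by_contra hui
    have hsub : ({i, j} : Set (Fin 3)) ⊆ {k : Fin 3 | u k ≠ q k} := by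
      intro k hk
      rcases hk with rfl | hk
      · exact hui
      · simp at hk; subst hk; exact huj
    have := Set.ncard_le_ncard hsub hufin
    rw [Set.ncard_pair (Ne.symm hj)] at this
    exact absurd (le_trans this hu) (by norm_num)
  have hvi : v i ≠ q i := fun h => hne (hui ▸ h ▸ rfl)
  have hvj : v j ≠ q j := fun h => huj ((hoff j hj) ▸ h)
  have hsub : ({i, j} : Set (Fin 3)) ⊆ {k : Fin 3 | v k ≠ q k} := by
    intro k hk
    rcases hk with rfl | hk
    · exact hvi
    · simp at hk; subst hk; exact hvj
  have := Set.ncard_le_ncard hsub (Set.toFinite _)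
  rw [Set.ncard_pair (Ne.symm hj)] at this
  exact absurd (le_trans this hv) (by norm_num)

/-- If two star graphs share a grid edge, their centers lie on a common axis line. -/
lemma share_edge_line {L : ℕ} {q q' : Fin 3 → Fin L} {e : Sym2 (Fin 3 → Fin L)}
    (h : e ∈ edgesIn (starGraph q)) (h' : e ∈ edgesIn (starGraph q')) :
    ∃ i : Fin 3, ∀ j : Fin 3, j ≠ i → q' j = q j := by
  obtain ⟨u, v, rfl, ⟨i, hoff, hstep⟩, hu, hv⟩ := h
  obtain ⟨u', v', heq, _, hu', hv'⟩ := h'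
  have hne : u i ≠ v i := by
    intro h
    rw [h] at hstep
    omega
  have huq' : u ∈ starGraph q' := by
    have : u ∈ s(u', v') := heq ▸ Sym2.mem_mk_left u v
    rcases Sym2.mem_iff.mp this with rfl | rfl
    · exact hu'
    · exact hv'
  have hvq' : v ∈ starGraph q' := by
    have : v ∈ s(u', v') := heq ▸ Sym2.mem_mk_right u v
    rcases Sym2.mem_iff.mp this with rfl | rfl
    · exact hu'
    · exact hv'
  refine ⟨i, fun j hj => ?_⟩
  have h1 := star_edge_on_line hu hv hoff hne j hj
  have h2 := star_edge_on_line huq' hvq' hoff hne j hj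
  rw [← h1, ← h2]

end Aux

/-- **5D Line Coloring.**
Given color routes `γ s p ∈ [L]³` with density at most `ρ`, and checks `x ∈ X`
with at most `m` adjacent packets `R x`, each packet adjacent to at most `κ`
checks, the checks can be colored with `3·|S|²·m·κ·ρ·L + 1` colors so that two
distinct same-colored checks have disjoint edge sets, where the edge set of `x`
is the union over `s ∈ S`, `p ∈ R x` of the grid edges with both endpoints in
`λ(γ s p)`. -/
theorem stmt16 (L ρ m κ : ℕ) (S : Type) [Fintype S] [Nonempty S]
    (P : Type) [Fintype P] [DecidableEq P] (γ : S → P → (Fin 3 → Fin L))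
    (hden : ∀ s : S, ∀ v : Fin 3 → Fin L,
      (Finset.univ.filter fun p : P => γ s p = v).card ≤ ρ)
    (X : Type) [Fintype X] (R : X → Finset P)
    (hm : ∀ x : X, (R x).card ≤ m)
    (hκ : ∀ p : P, (Finset.univ.filter fun x : X => p ∈ R x).card ≤ κ) :
    ∃ η : X → Fin (3 * (Fintype.card S) ^ 2 * m * κ * ρ * L + 1),
      ∀ x x' : X, x ≠ x' → η x = η x' →
        Disjoint (⋃ s : S, ⋃ p ∈ R x, edgesIn (starGraph (γ s p)))
          (⋃ s : S, ⋃ p ∈ R x', edgesIn (starGraph (γ s p))) := by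
  classical
  set N := 3 * (Fintype.card S) ^ 2 * m * κ * ρ * L with hN
  set E : X → Set (Sym2 (Fin 3 → Fin L)) :=
    fun x => ⋃ s : S, ⋃ p ∈ R x, edgesIn (starGraph (γ s p)) with hE
  set A : X → X → Prop := fun x y => x ≠ y ∧ ¬ Disjoint (E x) (E y) with hA
  -- line finset
  set Lset : (Fin 3 → Fin L) → Finset (Fin 3 → Fin L) :=
    fun q => Finset.univ.filter (fun v => ∃ i : Fin 3, ∀ j : Fin 3, j ≠ i → v j = q j)
    with hLset
  have hLcard : ∀ q, (Lset q).card ≤ 3 * L := by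
    intro q
    have hsub : Lset q ⊆ (Finset.univ : Finset (Fin 3)).biUnion
        (fun i => (Finset.univ : Finset (Fin L)).image (fun c => Function.update q i c)) := by
      intro v hv
      simp only [hLset, Finset.mem_filter] at hv
      obtain ⟨-, i, hi⟩ := hv
      apply Finset.mem_biUnion.mpr
      refine ⟨i, Finset.mem_univ i, Finset.mem_image.mpr ⟨v i, Finset.mem_univ _, ?_⟩⟩
      funext j
      by_cases hj : j = i
      · subst hj; simp
      · rw [Function.update_of_ne hj]; exact (hi j hj).symm
    calc (Lset q).card ≤ _ := Finset.card_le_card hsub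
      _ ≤ (Finset.univ : Finset (Fin 3)).card * L := by
          apply Finset.card_biUnion_le_card_mul
          intro i _
          calc _ ≤ (Finset.univ : Finset (Fin L)).card := Finset.card_image_le
            _ = L := by simp
      _ = 3 * L := by simp
  -- degree bound
  have hdeg : ∀ x : X, (@Finset.filter X (fun y => A x y)
      (fun y => Classical.propDecidable _) Finset.univ).card ≤ N := by
    intro x
    set B : Finset X := (Finset.univ : Finset S).biUnion fun s =>
      (R x).biUnion fun p =>
      (Finset.univ : Finset S).biUnion fun s' =>
      (Lset (γ s p)).biUnion fun v =>
      (Finset.univ.filter fun p' : P => γ s' p' = v).biUnion fun p' =>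
      (Finset.univ.filter fun y : X => p' ∈ R y) with hB
    have hsub : (@Finset.filter X (fun y => A x y)
        (fun y => Classical.propDecidable _) Finset.univ) ⊆ B := by
      intro y hy
      simp only [Finset.mem_filter, hA] at hy
      obtain ⟨-, -, hnd⟩ := hy
      obtain ⟨e, he, he'⟩ := Set.not_disjoint_iff.mp hnd
      simp only [hE, Set.mem_iUnion] at he he'
      obtain ⟨s, p, hp, hep⟩ := he
      obtain ⟨s', p', hp', hep'⟩ := he'
      obtain ⟨i, hi⟩ := share_edge_line hep hep'
      apply Finset.mem_biUnion.mpr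
      refine ⟨s, Finset.mem_univ s, Finset.mem_biUnion.mpr ⟨p, hp, ?_⟩⟩
      refine Finset.mem_biUnion.mpr ⟨s', Finset.mem_univ s', ?_⟩
      refine Finset.mem_biUnion.mpr ⟨γ s' p', ?_, ?_⟩
      · simp only [hLset, Finset.mem_filter]
        exact ⟨Finset.mem_univ _, i, hi⟩
      refine Finset.mem_biUnion.mpr ⟨p', ?_, ?_⟩
      · simp
      · simp [hp']
    calc (@Finset.filter X (fun y => A x y)
        (fun y => Classical.propDecidable _) Finset.univ).card ≤ B.card :=
          Finset.card_le_card hsub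
      _ ≤ (Fintype.card S) * (m * ((Fintype.card S) * (3 * L * (ρ * κ)))) := by
          rw [hB]
          have h1 : ∀ s ∈ (Finset.univ : Finset S),
              ((R x).biUnion fun p =>
                (Finset.univ : Finset S).biUnion fun s' =>
                (Lset (γ s p)).biUnion fun v =>
                (Finset.univ.filter fun p' : P => γ s' p' = v).biUnion fun p' =>
                (Finset.univ.filter fun y : X => p' ∈ R y)).card
              ≤ m * ((Fintype.card S) * (3 * L * (ρ * κ))) := by
            intro s _
            have h2 : ∀ p ∈ R x,
                ((Finset.univ : Finset S).biUnion fun s' =>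
                  (Lset (γ s p)).biUnion fun v =>
                  (Finset.univ.filter fun p' : P => γ s' p' = v).biUnion fun p' =>
                  (Finset.univ.filter fun y : X => p' ∈ R y)).card
                ≤ (Fintype.card S) * (3 * L * (ρ * κ)) := by
              intro p _
              have h3 : ∀ s' ∈ (Finset.univ : Finset S),
                  ((Lset (γ s p)).biUnion fun v =>
                    (Finset.univ.filter fun p' : P => γ s' p' = v).biUnion fun p' =>
                    (Finset.univ.filter fun y : X => p' ∈ R y)).card
                  ≤ 3 * L * (ρ * κ) := by
                intro s' _
                have h4 : ∀ v ∈ Lset (γ s p),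
                    ((Finset.univ.filter fun p' : P => γ s' p' = v).biUnion fun p' =>
                      (Finset.univ.filter fun y : X => p' ∈ R y)).card ≤ ρ * κ := by
                  intro v _
                  have h5 : ∀ p' ∈ (Finset.univ.filter fun p' : P => γ s' p' = v),
                      (Finset.univ.filter fun y : X => p' ∈ R y).card ≤ κ :=
                    fun p' _ => hκ p'
                  calc _ ≤ (Finset.univ.filter fun p' : P => γ s' p' = v).card * κ :=
                        Finset.card_biUnion_le_card_mul _ _ _ h5
                    _ ≤ ρ * κ := Nat.mul_le_mul_right κ (hden s' v)
                calc _ ≤ (Lset (γ s p)).card * (ρ * κ) :=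
                      Finset.card_biUnion_le_card_mul _ _ _ h4
                  _ ≤ 3 * L * (ρ * κ) := Nat.mul_le_mul_right _ (hLcard _)
              calc _ ≤ (Finset.univ : Finset S).card * (3 * L * (ρ * κ)) :=
                    Finset.card_biUnion_le_card_mul _ _ _ h3
                _ = (Fintype.card S) * (3 * L * (ρ * κ)) := by rw [Finset.card_univ]
            calc _ ≤ (R x).card * ((Fintype.card S) * (3 * L * (ρ * κ))) :=
                  Finset.card_biUnion_le_card_mul _ _ _ h2
              _ ≤ m * ((Fintype.card S) * (3 * L * (ρ * κ))) :=
                  Nat.mul_le_mul_right _ (hm x)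
          calc _ ≤ (Finset.univ : Finset S).card * (m * ((Fintype.card S) * (3 * L * (ρ * κ)))) :=
                Finset.card_biUnion_le_card_mul _ _ _ h1
            _ = (Fintype.card S) * (m * ((Fintype.card S) * (3 * L * (ρ * κ)))) := by
                rw [Finset.card_univ]
      _ = N := by rw [hN]; ring
  obtain ⟨f, hf⟩ := greedy_coloring A
    (fun x y h => ⟨h.1.symm, fun hd => h.2 hd.symm⟩)
    (fun x h => h.1 rfl) N hdeg
  refine ⟨f, fun x x' hne heq => ?_⟩
  by_contra hnd
  exact hf x x' ⟨hne, hnd⟩ heq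
end
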